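/- Let G be a block graph with exactly one central vertex c (i.e., every 1-clique partition of G has C={c}). Let D be the set of variables σ_{pq} such that the unique shortest path p↔q does not contain c. Then no variable of D appears in any minimal binomial generator of the kernel of the shortest path map ψ. -/

import Mathlib

/-- The induced subgraph of `G` on the vertex set `S` is a 1-clique sum of complete
graphs. -/
inductive SimpleGraph.IsCliqueSumOfCompletes {V : Type*} (G : SimpleGraph V) : Set V → Prop
  | complete (S : Set V) (h : ∀ ⦃i⦄, i ∈ S → ∀ ⦃j⦄, j ∈ S → i ≠ j → G.Adj i j) :
      IsCliqueSumOfCompletes G S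
  | sum (A B : Set V) (c : V) (hAB : Disjoint A B) (hcA : c ∉ A) (hcB : c ∉ B)
      (hA : A.Nonempty) (hB : B.Nonempty)
      (hsep : ∀ a ∈ A, ∀ b ∈ B, ∀ w : G.Walk a b,
        (∀ x ∈ w.support, x ∈ A ∪ B ∪ {c}) → c ∈ w.support)
      (h1 : IsCliqueSumOfCompletes G (A ∪ {c}))
      (h2 : IsCliqueSumOfCompletes G (B ∪ {c})) :
      IsCliqueSumOfCompletes G (A ∪ B ∪ {c})

/-- A block graph: every connected component is a 1-clique sum of complete graphs. -/
def SimpleGraph.IsBlockGraph {V : Type*} (G : SimpleGraph V) : Prop :=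
  ∀ v : V, G.IsCliqueSumOfCompletes {w | G.Reachable v w}

open MvPolynomial

variable {n : ℕ}

/-- The shortest path monomial `a_i a_j ∏_{(i',j') ∈ i↔j} k_{i'j'}`
(the image of `σ_{ij}` under the shortest path map `ψ`; for `i = j` it is `a_i²`). -/
noncomputable def psiMon {G : SimpleGraph (Fin n)} (sp : ∀ i j : Fin n, G.Walk i j)
    (e : Sym2 (Fin n)) : MvPolynomial (Fin n ⊕ Sym2 (Fin n)) ℝ :=
  X (Sum.inl e.out.1) * X (Sum.inl e.out.2) *
    ((sp e.out.1 e.out.2).darts.map fun d => X (Sum.inr s(d.fst, d.snd))).prod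

/-- `c` is a central vertex of `G`: there is a 1-clique partition `(A, B, {c})` of the
vertex set with `{c}` separating `A` from `B`. -/
def IsCentralVertex (G : SimpleGraph (Fin n)) (c : Fin n) : Prop :=
  ∃ A B : Set (Fin n), A.Nonempty ∧ B.Nonempty ∧ Disjoint A B ∧ c ∉ A ∧ c ∉ B ∧
    A ∪ B ∪ {c} = Set.univ ∧ ∀ a ∈ A, ∀ b ∈ B, ∀ w : G.Walk a b, c ∈ w.support

/-!
If `c` is the only central vertex, `G` is a star of cliques glued at `c`: every vertex is adjacent
to `c`, and two vertices joined by a walk avoiding `c` are adjacent, since a cut vertex `c₀ ≠ c`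
in the clique-sum decomposition would itself be central. Hence a shortest path is a single vertex,
an edge, or `x - c - y`, and a variable of `D` is either `σ_{xy}` for an edge `xy` avoiding `c` or
`σ_{pp}` with `p ≠ c`. In the first case `k_{xy}` occurs only in `ψ(σ_{xy})`. In the second, once
the first case has removed the other variables of `D`, the exponent of `a_p` in `ψ(σ_e)` is that
of `k_{pc}` plus `2` if `e = pp`. Comparing these exponents in `ψ(σ^u) = ψ(σ^v)` gives
`u_e = v_e`, and coprimality forces both to vanish.
-/

namespace SimpleGraph

variable {V : Type*} {G : SimpleGraph V} {c : V} {S T A B : Set V} {x y : V}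

def IsNeighborClosedExcept (G : SimpleGraph V) (c : V) (S : Set V) : Prop :=
  ∀ x ∈ S, x ≠ c → ∀ y, G.Adj x y → y ∈ S

def Separates (G : SimpleGraph V) (c : V) (A B : Set V) : Prop :=
  ∀ a ∈ A, ∀ b ∈ B, ∀ w : G.Walk a b, (∀ x ∈ w.support, x ∈ A ∪ B ∪ {c}) → c ∈ w.support

/-- On `S`, the graph `G` consists of cliques glued together at the vertex `c`. -/
def IsCliqueStarOn (G : SimpleGraph V) (c : V) (S : Set V) : Prop :=
  (∀ x ∈ S, x ≠ c → G.Adj x c) ∧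
    ∀ x ∈ S, ∀ y, x ≠ y → ∀ w : G.Walk x y, c ∉ w.support → G.Adj x y

theorem Separates.symm (h : G.Separates c A B) : G.Separates c B A := by
  intro b hb a ha w hw
  have hw' : ∀ x ∈ w.reverse.support, x ∈ A ∪ B ∪ {c} := by
    simpa [Set.union_comm A B] using hw
  simpa using h a ha b hb w.reverse hw'

theorem Walk.support_subset_or_exists_walk_to (hS : G.IsNeighborClosedExcept c S)
    (w : G.Walk x y) (hx : x ∈ S) :
    (∀ z ∈ w.support, z ∈ S) ∨
      ∃ p : G.Walk x c, (∀ z ∈ p.support, z ∈ S) ∧ p.support ⊆ w.support := by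
  induction w with
  | nil => left; simpa using hx
  | @cons x x' y hadj w ih =>
    by_cases hxc : x = c
    · subst hxc
      exact Or.inr ⟨nil, by simpa using hx, by simp⟩
    · rcases ih (hS x hx hxc x' hadj) with hw | ⟨p, hpS, hpw⟩
      · exact Or.inl (by simpa [hx] using hw)
      · exact Or.inr ⟨cons hadj p, by simpa [hx] using hpS, List.cons_subset_cons x hpw⟩

theorem IsNeighborClosedExcept.support_subset (hS : G.IsNeighborClosedExcept c S)
    (w : G.Walk x y) (hx : x ∈ S) (hc : c ∉ w.support) : ∀ z ∈ w.support, z ∈ S :=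
  (w.support_subset_or_exists_walk_to hS hx).resolve_right
    fun ⟨p, _, hpw⟩ => hc (hpw p.end_mem_support)

theorem IsNeighborClosedExcept.union_singleton_left
    (hS : G.IsNeighborClosedExcept c (A ∪ B ∪ {c})) (hsep : G.Separates c A B)
    (hcA : c ∉ A) (hcB : c ∉ B) : G.IsNeighborClosedExcept c (A ∪ {c}) := by
  rintro x (hxA | rfl) hxc y hxy
  · rcases hS x (Or.inl (Or.inl hxA)) hxc y hxy with (hyA | hyB) | rfl
    · exact Or.inl hyA
    · have := hsep x hxA y hyB (Walk.cons hxy Walk.nil) (by simp [hxA, hyB])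
      simp only [Walk.support_cons, Walk.support_nil, List.mem_cons, List.not_mem_nil,
        or_false] at this
      rcases this with rfl | rfl
      exacts [absurd hxA hcA, absurd hyB hcB]
    · exact Or.inr rfl
  · exact absurd rfl hxc

theorem IsCliqueStarOn.union (hS : G.IsCliqueStarOn c S) (hT : G.IsCliqueStarOn c T) :
    G.IsCliqueStarOn c (S ∪ T) := by
  refine ⟨?_, ?_⟩
  · rintro x (hx | hx)
    exacts [hS.1 x hx, hT.1 x hx]
  · rintro x (hx | hx)
    exacts [hS.2 x hx, hT.2 x hx]

theorem Walk.edges_eq_of_length_eq_one (w : G.Walk x y) (h : w.length = 1) :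
    w.support = [x, y] ∧ w.edges = [s(x, y)] := by
  rcases w with _ | ⟨_, _ | ⟨_, w⟩⟩ <;> simp_all

theorem Walk.exists_edges_eq_of_length_eq_two (w : G.Walk x y) (h : w.length = 2) :
    ∃ m, w.support = [x, m, y] ∧ w.edges = [s(x, m), s(m, y)] := by
  rcases w with _ | ⟨_, _ | ⟨_, _ | ⟨_, w⟩⟩⟩ <;> simp_all

theorem IsCliqueStarOn.edges_of_length_eq_dist (hstar : G.IsCliqueStarOn c Set.univ)
    (w : G.Walk x y) (hw : w.length = G.dist x y) :
    (x = y ∧ w.edges = []) ∨ (G.Adj x y ∧ w.support = [x, y] ∧ w.edges = [s(x, y)]) ∨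
      (x ≠ y ∧ ¬G.Adj x y ∧ w.edges = [s(x, c), s(c, y)]) := by
  by_cases hxy : x = y
  · subst hxy
    exact Or.inl ⟨rfl, Walk.edges_eq_nil.mpr (Walk.length_eq_zero_iff.mp (by simp [hw]))⟩
  by_cases hadj : G.Adj x y
  · exact Or.inr (Or.inl ⟨hadj, w.edges_eq_of_length_eq_one (by simp [hw, hadj])⟩)
  have hxc : x ≠ c := by rintro rfl; exact hadj (hstar.1 y trivial (Ne.symm hxy)).symm
  have hyc : y ≠ c := by rintro rfl; exact hadj (hstar.1 x trivial hxy)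
  let wc : G.Walk x y := .cons (hstar.1 x trivial hxc) (.cons (hstar.1 y trivial hyc).symm .nil)
  have hdist : G.dist x y = 2 := by
    have := wc.reachable.one_lt_dist_of_ne_of_not_adj hxy hadj
    have := dist_le wc
    simp [wc] at this
    omega
  obtain ⟨m, hsupp, hedges⟩ := w.exists_edges_eq_of_length_eq_two (hw.trans hdist)
  obtain rfl : m = c := by
    by_contra hmc
    exact hadj (hstar.2 x trivial y hxy w (by simp [hsupp, Ne.symm hxc, Ne.symm hmc, Ne.symm hyc]))
  exact Or.inr (Or.inr ⟨hxy, hadj, hedges⟩)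

end SimpleGraph

section CentralVertex

open SimpleGraph

variable {G : SimpleGraph (Fin n)} {c c₀ : Fin n} {S A B : Set (Fin n)}

theorem isCentralVertex_of_separates (hS : G.IsNeighborClosedExcept c (A ∪ B ∪ {c₀}))
    (hsep : G.Separates c₀ A B) (hAB : Disjoint A B) (hc₀A : c₀ ∉ A) (hc₀B : c₀ ∉ B)
    (hB : B.Nonempty) (hcA : c ∈ A) : IsCentralVertex G c₀ := by
  have hcB : c ∉ B := Set.disjoint_left.mp hAB hcA
  have hcc₀ : c ≠ c₀ := by rintro rfl; exact hc₀A hcA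
  refine ⟨(B ∪ {c₀})ᶜ, B, ⟨c, by simp [hcB, hcc₀]⟩, hB,
    Set.disjoint_left.mpr fun x hx hxB => hx (Or.inl hxB), by simp, hc₀B,
    by ext; simp; tauto, ?_⟩
  intro a ha b hb w
  by_contra hw
  -- run `w` backwards from `b`, stopping at `c` if it gets there: we stay in `S` and end in `A`
  obtain ⟨a', ha', q, hqS, hqc₀⟩ : ∃ a' ∈ A, ∃ q : G.Walk b a',
      (∀ z ∈ q.support, z ∈ A ∪ B ∪ {c₀}) ∧ c₀ ∉ q.support := by
    rcases w.reverse.support_subset_or_exists_walk_to hS (Or.inl (Or.inr hb)) with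
      hwS | ⟨p, hpS, hpw⟩
    · refine ⟨a, ?_, w.reverse, hwS, by simpa using hw⟩
      rcases hwS a (by simp) with (h | h) | h
      exacts [h, absurd (Or.inl h) ha, absurd (Or.inr h) ha]
    · exact ⟨c, hcA, p, hpS, fun h => hw (by simpa using hpw h)⟩
  exact hqc₀ (by simpa using hsep a' ha' b hb q.reverse (by simpa using hqS))

theorem SimpleGraph.IsCliqueSumOfCompletes.isCliqueStarOn
    (huniq : ∀ c', IsCentralVertex G c' → c' = c) (h : G.IsCliqueSumOfCompletes S)
    (hcS : c ∈ S) (hS : G.IsNeighborClosedExcept c S) : G.IsCliqueStarOn c S := by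
  induction h with
  | complete S hK =>
    exact ⟨fun x hx hxc => hK hx hcS hxc,
      fun x hx y hxy w hw => hK hx (hS.support_subset w hx hw y w.end_mem_support) hxy⟩
  | sum A B c₀ hAB hc₀A hc₀B hA hB hsep _ _ ihA ihB =>
    have hsep : G.Separates c₀ A B := hsep
    have hS' : G.IsNeighborClosedExcept c (B ∪ A ∪ {c₀}) := by rwa [Set.union_comm B A]
    obtain rfl : c = c₀ := by
      by_contra hne
      rcases hcS with (hcA | hcB) | hcc₀
      · exact hne (huniq c₀ (isCentralVertex_of_separates hS hsep hAB hc₀A hc₀B hB hcA)).symm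
      · exact hne (huniq c₀
          (isCentralVertex_of_separates hS' hsep.symm hAB.symm hc₀B hc₀A hA hcB)).symm
      · exact hne hcc₀
    have hstarA := ihA (Or.inr rfl) (hS.union_singleton_left hsep hc₀A hc₀B)
    have hstarB := ihB (Or.inr rfl) (hS'.union_singleton_left hsep.symm hc₀B hc₀A)
    have hsplit : A ∪ B ∪ {c} = (A ∪ {c}) ∪ (B ∪ {c}) := by ext; simp; tauto
    rw [hsplit]
    exact hstarA.union hstarB

theorem SimpleGraph.IsBlockGraph.isCliqueStarOn_univ (hG : G.IsBlockGraph) (hconn : G.Connected)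
    (huniq : ∀ c', IsCentralVertex G c' → c' = c) : G.IsCliqueStarOn c Set.univ := by
  have h := hG c
  rw [show {w | G.Reachable c w} = Set.univ from Set.eq_univ_of_forall (hconn c)] at h
  exact h.isCliqueStarOn huniq trivial fun _ _ _ _ _ => trivial

end CentralVertex

section Exponents

theorem MvPolynomial.prod_map_X {σ R : Type*} [CommSemiring R] [DecidableEq σ] (l : List σ) :
    (l.map (X : σ → MvPolynomial σ R)).prod = monomial (Multiset.toFinsupp (l : Multiset σ)) 1 := by
  induction l with
  | nil => simp
  | cons a l ih =>
    rw [List.map_cons, List.prod_cons, ih, X, monomial_mul, one_mul, ← Multiset.cons_coe,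
      ← Multiset.singleton_add, Multiset.toFinsupp_add, Multiset.toFinsupp_singleton]

theorem MvPolynomial.aeval_monomial_one_eq {σ ι R : Type*} [CommSemiring R] (E : ι → σ →₀ ℕ)
    (u : ι →₀ ℕ) :
    aeval (fun i => (monomial (E i) 1 : MvPolynomial σ R)) (monomial u (1 : R)) =
      monomial (u.sum fun i k => k • E i) 1 := by
  rw [aeval_monomial, map_one, one_mul, monomial_finsupp_sum_index, map_one, one_mul]
  simp only [monomial_pow, one_pow]

theorem Finsupp.sum_mul_eq_of_forall_mem_support {ι : Type*} [DecidableEq ι] (u : ι →₀ ℕ)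
    {w w' : ι → ℕ} {m : ℕ} {i₀ : ι}
    (h : ∀ i ∈ u.support, w i = (if i = i₀ then m else 0) + w' i) :
    (u.sum fun i k => k * w i) = m * u i₀ + u.sum fun i k => k * w' i := by
  rw [Finsupp.sum, Finset.sum_congr rfl fun i hi => by rw [h i hi, mul_add],
    Finset.sum_add_distrib, Finsupp.sum]
  congr 1
  simp only [mul_ite, mul_zero, Finset.sum_ite_eq', Finsupp.mem_support_iff]
  split_ifs <;> simp_all [mul_comm]

theorem Finsupp.apply_eq_zero_of_disjoint_support {ι : Type*} {u v : ι →₀ ℕ}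
    (h : Disjoint u.support v.support) {i : ι} (hi : u i = v i) : u i = 0 ∧ v i = 0 := by
  have hu : u i = 0 := by
    by_contra hu
    exact Finset.disjoint_left.mp h (Finsupp.mem_support_iff.mpr hu)
      (Finsupp.mem_support_iff.mpr (hi ▸ hu))
  exact ⟨hu, hi ▸ hu⟩

variable {G : SimpleGraph (Fin n)}

noncomputable def pathExponent (sp : ∀ i j : Fin n, G.Walk i j) (e : Sym2 (Fin n)) :
    Fin n ⊕ Sym2 (Fin n) →₀ ℕ :=
  Finsupp.single (Sum.inl e.out.1) 1 + Finsupp.single (Sum.inl e.out.2) 1 +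
    Multiset.toFinsupp ↑((sp e.out.1 e.out.2).edges.map (Sum.inr (α := Fin n)))

theorem psiMon_eq_monomial (sp : ∀ i j : Fin n, G.Walk i j) (e : Sym2 (Fin n)) :
    psiMon sp e = monomial (pathExponent sp e) 1 := by
  have hprod : ((sp e.out.1 e.out.2).darts.map fun d => X (Sum.inr s(d.fst, d.snd))).prod =
      (((sp e.out.1 e.out.2).edges.map (Sum.inr (α := Fin n))).map
        (X : _ → MvPolynomial _ ℝ)).prod := by
    simp only [SimpleGraph.Walk.edges, List.map_map]
    rfl
  rw [psiMon, hprod, MvPolynomial.prod_map_X, X, X, monomial_mul, monomial_mul, one_mul, one_mul,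
    pathExponent]

theorem pathExponent_apply_inl (sp : ∀ i j : Fin n, G.Walk i j) (e : Sym2 (Fin n)) (p : Fin n) :
    pathExponent sp e (Sum.inl p) =
      (if e.out.1 = p then 1 else 0) + (if e.out.2 = p then 1 else 0) := by
  simp [pathExponent, Finsupp.single_apply]

theorem pathExponent_apply_inr (sp : ∀ i j : Fin n, G.Walk i j) (e f : Sym2 (Fin n)) :
    pathExponent sp e (Sum.inr f) = (sp e.out.1 e.out.2).edges.count f := by
  simp [pathExponent, List.count_map_of_injective _ _ Sum.inr_injective]

theorem sum_pathExponent_apply_eq_of_mem_ker {sp : ∀ i j : Fin n, G.Walk i j}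
    {u v : Sym2 (Fin n) →₀ ℕ}
    (hker : (monomial u (1 : ℝ) - monomial v 1) ∈
      RingHom.ker (aeval (psiMon sp) :
        MvPolynomial (Sym2 (Fin n)) ℝ →ₐ[ℝ] MvPolynomial (Fin n ⊕ Sym2 (Fin n)) ℝ).toRingHom)
    (t : Fin n ⊕ Sym2 (Fin n)) :
    (u.sum fun e k => k * pathExponent sp e t) = v.sum fun e k => k * pathExponent sp e t := by
  have hpsi : psiMon sp = fun e => monomial (pathExponent sp e) 1 :=
    funext (psiMon_eq_monomial sp)
  rw [RingHom.mem_ker, AlgHom.toRingHom_eq_coe, RingHom.coe_coe, map_sub, sub_eq_zero, hpsi] at hker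
  rw [MvPolynomial.aeval_monomial_one_eq, MvPolynomial.aeval_monomial_one_eq] at hker
  simpa only [Finsupp.sum_apply, Finsupp.smul_apply, smul_eq_mul] using
    DFunLike.congr_fun (monomial_left_injective one_ne_zero hker) t

end Exponents

namespace SimpleGraph.IsCliqueStarOn

variable {V : Type*} {G : SimpleGraph V} {c x y : V} [DecidableEq V]

theorem count_edges_of_adj (hstar : G.IsCliqueStarOn c Set.univ) (w : G.Walk x y)
    (hw : w.length = G.dist x y) {a b : V} (hab : G.Adj a b) (hac : a ≠ c) (hbc : b ≠ c) :
    w.edges.count s(a, b) = if s(x, y) = s(a, b) then 1 else 0 := by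
  rcases hstar.edges_of_length_eq_dist w hw with ⟨rfl, hE⟩ | ⟨-, -, hE⟩ | ⟨-, hnadj, hE⟩
  · rw [hE, if_neg]
    · rfl
    · intro h
      rcases Sym2.eq_iff.mp h with ⟨rfl, rfl⟩ | ⟨rfl, rfl⟩ <;> exact hab.ne rfl
  · simp only [hE, List.count_singleton, beq_iff_eq]
  · rw [if_neg]
    · simp [hE, Ne.symm hac, Ne.symm hbc]
    · intro h
      rcases Sym2.eq_iff.mp h with ⟨rfl, rfl⟩ | ⟨rfl, rfl⟩
      exacts [hnadj hab, hnadj hab.symm]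

theorem count_edges_center (hstar : G.IsCliqueStarOn c Set.univ) (w : G.Walk x y)
    (hw : w.length = G.dist x y) (hxy : x = y ∨ c ∈ w.support) {p : V} (hpc : p ≠ c) :
    (if x = p then 1 else 0) + (if y = p then 1 else 0) =
      (if s(x, y) = s(p, p) then 2 else 0) + w.edges.count s(p, c) := by
  rcases hstar.edges_of_length_eq_dist w hw with ⟨rfl, hE⟩ | ⟨hadj, hsupp, hE⟩ | ⟨hne, -, hE⟩
  · by_cases hx : x = p <;> simp [hE, hx]
  · have hcxy : c = x ∨ c = y := by
      rcases hxy with h | h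
      · exact absurd h hadj.ne
      · simpa [hsupp] using h
    rw [hE, List.count_singleton]
    rcases hcxy with rfl | rfl
    · by_cases hy : y = p <;> simp [hy, hpc, Ne.symm hpc]
    · by_cases hx : x = p <;> simp [hx, Ne.symm hpc]
  · have : s(x, y) ≠ s(p, p) := by
      intro h
      rcases Sym2.eq_iff.mp h with ⟨rfl, rfl⟩ | ⟨rfl, rfl⟩ <;> exact hne rfl
    rw [hE, if_neg this]
    by_cases hx : x = p <;> by_cases hy : y = p <;> simp [hx, hy, hpc, Ne.symm hpc]

end SimpleGraph.IsCliqueStarOn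

theorem Sym2.mk_out {α : Type*} (e : Sym2 α) : s(e.out.1, e.out.2) = e := Quot.out_eq e

section ShortestPaths

open SimpleGraph

variable {G : SimpleGraph (Fin n)} {c : Fin n} {sp : ∀ i j : Fin n, G.Walk i j}

theorem pathExponent_apply_inr_of_center_notMem (hstar : G.IsCliqueStarOn c Set.univ)
    (hsp : ∀ i j, (sp i j).length = G.dist i j) {e₀ : Sym2 (Fin n)}
    (hne : e₀.out.1 ≠ e₀.out.2) (hc : c ∉ (sp e₀.out.1 e₀.out.2).support) (e : Sym2 (Fin n)) :
    pathExponent sp e (Sum.inr e₀) = if e = e₀ then 1 else 0 := by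
  have hadj₀ : G.Adj e₀.out.1 e₀.out.2 := by
    rcases hstar.edges_of_length_eq_dist _ (hsp e₀.out.1 e₀.out.2) with
      ⟨h, -⟩ | ⟨h, -⟩ | ⟨-, -, hE⟩
    · exact absurd h hne
    · exact h
    · exact absurd ((sp _ _).snd_mem_support_of_mem_edges (t := e₀.out.1) (by simp [hE])) hc
  have h := hstar.count_edges_of_adj (sp e.out.1 e.out.2) (hsp _ _) hadj₀
    (fun h => hc (h ▸ (sp _ _).start_mem_support)) (fun h => hc (h ▸ (sp _ _).end_mem_support))
  rwa [Sym2.mk_out, Sym2.mk_out, ← pathExponent_apply_inr] at h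

theorem pathExponent_apply_inl_eq (hstar : G.IsCliqueStarOn c Set.univ)
    (hsp : ∀ i j, (sp i j).length = G.dist i j) {p : Fin n} (hpc : p ≠ c) {e : Sym2 (Fin n)}
    (he : e.out.1 = e.out.2 ∨ c ∈ (sp e.out.1 e.out.2).support) :
    pathExponent sp e (Sum.inl p) =
      (if e = s(p, p) then 2 else 0) + pathExponent sp e (Sum.inr s(p, c)) := by
  rw [pathExponent_apply_inl, pathExponent_apply_inr,
    hstar.count_edges_center (sp _ _) (hsp _ _) he hpc, Sym2.mk_out]

theorem apply_eq_zero_of_out_ne (hstar : G.IsCliqueStarOn c Set.univ)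
    (hsp : ∀ i j, (sp i j).length = G.dist i j) {u v : Sym2 (Fin n) →₀ ℕ}
    (hcop : Disjoint u.support v.support)
    (hexp : ∀ t, (u.sum fun e k => k * pathExponent sp e t) =
      v.sum fun e k => k * pathExponent sp e t)
    {e : Sym2 (Fin n)} (hne : e.out.1 ≠ e.out.2) (hc : c ∉ (sp e.out.1 e.out.2).support) :
    u e = 0 ∧ v e = 0 := by
  have hsum (f : Sym2 (Fin n) →₀ ℕ) := f.sum_mul_eq_of_forall_mem_support
    (w := fun e' => pathExponent sp e' (Sum.inr e)) (w' := fun _ => 0)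
    fun e' _ => (pathExponent_apply_inr_of_center_notMem hstar hsp hne hc e').trans
      (add_zero _).symm
  have h := hexp (Sum.inr e)
  rw [hsum u, hsum v] at h
  exact Finsupp.apply_eq_zero_of_disjoint_support hcop (by simpa using h)

theorem apply_mk_self_eq_zero (hstar : G.IsCliqueStarOn c Set.univ)
    (hsp : ∀ i j, (sp i j).length = G.dist i j) {u v : Sym2 (Fin n) →₀ ℕ}
    (hcop : Disjoint u.support v.support)
    (hexp : ∀ t, (u.sum fun e k => k * pathExponent sp e t) =
      v.sum fun e k => k * pathExponent sp e t)
    {p : Fin n} (hpc : p ≠ c) : u s(p, p) = 0 ∧ v s(p, p) = 0 := by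
  have hD (e : Sym2 (Fin n)) (he : u e ≠ 0 ∨ v e ≠ 0) :
      e.out.1 = e.out.2 ∨ c ∈ (sp e.out.1 e.out.2).support := by
    by_contra! h
    have := apply_eq_zero_of_out_ne hstar hsp hcop hexp h.1 h.2
    omega
  have hsum (f : Sym2 (Fin n) →₀ ℕ) (hf : ∀ e, f e ≠ 0 → u e ≠ 0 ∨ v e ≠ 0) :=
    f.sum_mul_eq_of_forall_mem_support fun e he => pathExponent_apply_inl_eq hstar hsp hpc
      (hD e (hf e (Finsupp.mem_support_iff.mp he)))
  have h := hexp (Sum.inl p)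
  rw [hsum u (fun _ h => Or.inl h), hsum v (fun _ h => Or.inr h), hexp (Sum.inr s(p, c))] at h
  exact Finsupp.apply_eq_zero_of_disjoint_support hcop (by omega)

end ShortestPaths

theorem D_variables_not_in_minimal_generators_general (G : SimpleGraph (Fin n))
    (hG : G.IsBlockGraph) (hconn : G.Connected)
    (sp : ∀ i j : Fin n, G.Walk i j)
    (hsp : ∀ i j, (sp i j).IsPath ∧ (sp i j).length = G.dist i j)
    (c : Fin n)
    (huniq : ∀ c', IsCentralVertex G c' → c' = c)
    (u v : Sym2 (Fin n) →₀ ℕ) (hcop : Disjoint u.support v.support)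
    (hker : (MvPolynomial.monomial u (1 : ℝ) - MvPolynomial.monomial v 1) ∈
      RingHom.ker (MvPolynomial.aeval (psiMon sp) :
        MvPolynomial (Sym2 (Fin n)) ℝ →ₐ[ℝ] MvPolynomial (Fin n ⊕ Sym2 (Fin n)) ℝ).toRingHom) :
    ∀ e : Sym2 (Fin n), c ∉ (sp e.out.1 e.out.2).support → u e = 0 ∧ v e = 0 := by
  classical
  have hstar := hG.isCliqueStarOn_univ hconn huniq
  have hlen : ∀ i j, (sp i j).length = G.dist i j := fun i j => (hsp i j).2
  have hexp := sum_pathExponent_apply_eq_of_mem_ker hker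
  intro e hc
  by_cases hne : e.out.1 = e.out.2
  · have hpc : e.out.1 ≠ c := fun h => hc (h ▸ (sp _ _).start_mem_support)
    rw [← Sym2.mk_out e, ← hne]
    exact apply_mk_self_eq_zero hstar hlen hcop hexp hpc
  · exact apply_eq_zero_of_out_ne hstar hlen hcop hexp hne hc

/-- For a block graph with a unique central vertex `c`, no variable `σ_{pq}` whose
shortest path `p↔q` avoids `c` appears in any minimal binomial generator
(a binomial `σ^u − σ^v` with coprime terms) of the kernel of the shortest path map. -/
theorem D_variables_not_in_minimal_generators (G : SimpleGraph (Fin n))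
    (hG : G.IsBlockGraph) (hconn : G.Connected)
    (sp : ∀ i j : Fin n, G.Walk i j)
    (hsp : ∀ i j, (sp i j).IsPath ∧ (sp i j).length = G.dist i j)
    (c : Fin n) (hc : IsCentralVertex G c)
    (huniq : ∀ c', IsCentralVertex G c' → c' = c)
    (u v : Sym2 (Fin n) →₀ ℕ) (hcop : Disjoint u.support v.support)
    (hker : (MvPolynomial.monomial u (1 : ℝ) - MvPolynomial.monomial v 1) ∈
      RingHom.ker (MvPolynomial.aeval (psiMon sp) :
        MvPolynomial (Sym2 (Fin n)) ℝ →ₐ[ℝ] MvPolynomial (Fin n ⊕ Sym2 (Fin n)) ℝ).toRingHom) :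
    ∀ e : Sym2 (Fin n), c ∉ (sp e.out.1 e.out.2).support → u e = 0 ∧ v e = 0 :=
  D_variables_not_in_minimal_generators_general G hG hconn sp hsp c huniq u v hcop hker
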